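/- arXiv:1307.6348 — 3 statements merged into one kernel-verified Lean document; each statement's English description precedes it below -/
import Mathlib

section
/- There exists a polynomial p : ℕ → ℕ such that for every finite alphabet Σ there is a function learner mapping each finite nonempty set of trees over Σ that all have the same root label to a disjunction-free multiplicity schema over Σ with: (soundness) for every such set D, D ⊆ L(learner(D)); and (completeness) for every MS S over Σ there exists a finite set CS_S ⊆ L(S) with |CS_S| ≤ p(|Σ|) such that for every finite set D with CS_S ⊆ D ⊆ L(S), L(learner(D)) = L(S). -/
namespace LSXML

/-- A multiplicity: one of `*`, `+`, `?`, `1`, `0`. -/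
inductive Mult : Type
  | star | plus | opt | one | zero
  deriving DecidableEq

/-- The set of natural numbers `⟦M⟧` denoted by a multiplicity `M`. -/
def Mult.sem : Mult → Set ℕ
  | .star => Set.univ
  | .plus => {n | 1 ≤ n}
  | .opt  => {0, 1}
  | .one  => {1}
  | .zero => {0}

/-- A disjunctive multiplicity expression (DME) `D₁^{M₁} ∥ ⋯ ∥ D_n^{M_n}` where each
`D_i` is a nonempty disjunction `a₁^{M'₁} | ⋯ | a_k^{M'_k}` of symbols with
multiplicities, and every symbol of the alphabet occurs at most once in the
whole expression. -/
structure DME (α : Type) : Type where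
  factors : List (List (α × Mult) × Mult)
  nonemptyDisj : ∀ d ∈ factors, d.1 ≠ []
  distinct : (factors.flatMap fun d => d.1.map Prod.fst).Nodup

/-- `L(a^M) = {a^i : i ∈ ⟦M⟧}`. -/
def atomLang {α : Type} (a : α) (M : Mult) : Set (Multiset α) :=
  {w | ∃ i ∈ Mult.sem M, w = Multiset.replicate i a}

/-- `L(a₁^{M₁} | ⋯ | a_k^{M_k}) = L(a₁^{M₁}) ∪ ⋯ ∪ L(a_k^{M_k})`. -/
def disjLang {α : Type} (d : List (α × Mult)) : Set (Multiset α) :=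
  {w | ∃ p ∈ d, w ∈ atomLang p.1 p.2}

/-- `L(D^M)`: multiset unions of `i` words of `L(D)`, for `i ∈ ⟦M⟧`. -/
def powLang {α : Type} (L : Set (Multiset α)) (M : Mult) : Set (Multiset α) :=
  {w | ∃ ws : List (Multiset α), ws.length ∈ Mult.sem M ∧ (∀ u ∈ ws, u ∈ L) ∧ w = ws.sum}

/-- Unordered concatenation (elementwise multiset union) of a list of languages. -/
def concatLang {α : Type} : List (Set (Multiset α)) → Set (Multiset α)
  | [] => {0}
  | L :: Ls => {w | ∃ u ∈ L, ∃ v ∈ concatLang Ls, w = u + v}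

/-- The language of unordered words of a DME. -/
def DME.lang {α : Type} (E : DME α) : Set (Multiset α) :=
  concatLang (E.factors.map fun d => powLang (disjLang d.1) d.2)

/-- A disjunction-free multiplicity expression `a₁^{M₁} ∥ ⋯ ∥ a_k^{M_k}` with
pairwise distinct symbols. -/
structure MExpr (α : Type) : Type where
  entries : List (α × Mult)
  distinct : (entries.map Prod.fst).Nodup

/-- The language of a disjunction-free multiplicity expression: multisets `w`
with `w(a_i) ∈ ⟦M_i⟧` for each entry `a_i^{M_i}` and `w(b) = 0` for every other
symbol `b`. -/
def MExpr.lang {α : Type} [DecidableEq α] (e : MExpr α) : Set (Multiset α) :=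
  {w | (∀ p ∈ e.entries, w.count p.1 ∈ Mult.sem p.2) ∧
       ∀ b : α, b ∉ e.entries.map Prod.fst → w.count b = 0}

/-- Finite rooted labeled trees. The list of children is to be understood as
unordered: its order is irrelevant for satisfaction of multiplicity schemas. -/
inductive UTree (α : Type) : Type
  | node : α → List (UTree α) → UTree α

/-- The label of the root of a tree. -/
def UTree.label {α : Type} : UTree α → α
  | .node a _ => a

/-- A tree satisfies a family of DME rules if for every node, the multiset of
labels of its children belongs to the language of the rule of its label. -/
inductive UTree.Sat {α : Type} (R : α → DME α) : UTree α → Prop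
  | node (a : α) (ts : List (UTree α)) :
      ((ts.map UTree.label : List α) : Multiset α) ∈ (R a).lang →
      (∀ t ∈ ts, UTree.Sat R t) →
      UTree.Sat R (UTree.node a ts)

/-- A disjunctive multiplicity schema (DMS): a root label together with a
DME rule for every symbol of the alphabet. -/
structure DMS (α : Type) : Type where
  root : α
  rules : α → DME α

/-- The set `L(S)` of trees satisfying a DMS `S`. -/
def DMS.lang {α : Type} (S : DMS α) : Set (UTree α) :=
  {t | t.label = S.root ∧ UTree.Sat S.rules t}

/-- Satisfaction of a family of disjunction-free rules. -/
inductive UTree.MSat {α : Type} [DecidableEq α] (R : α → MExpr α) : UTree α → Prop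
  | node (a : α) (ts : List (UTree α)) :
      ((ts.map UTree.label : List α) : Multiset α) ∈ (R a).lang →
      (∀ t ∈ ts, UTree.MSat R t) →
      UTree.MSat R (UTree.node a ts)

/-- A disjunction-free multiplicity schema (MS). -/
structure MS (α : Type) : Type where
  root : α
  rules : α → MExpr α

/-- The set `L(S)` of trees satisfying an MS `S`. -/
def MS.lang {α : Type} [DecidableEq α] (S : MS α) : Set (UTree α) :=
  {t | t.label = S.root ∧ UTree.MSat S.rules t}


/-- A sample for schema learning: a finite nonempty set of trees all having the
same root label. -/
def TreeSample (α : Type) : Type :=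
  {D : Finset (UTree α) // D.Nonempty ∧ ∃ r : α, ∀ t ∈ D, t.label = r}

/-! The learner reads off, for all labels `a` and `b`, the set `C` of numbers of `b`-children
of `a`-nodes in the sample, and gives `b` in the rule of `a` the least multiplicity whose
semantics contains `C`. The sample satisfies these rules, and at every label occurring in the
sample they are at least as tight as the rules of any schema containing the sample; in a tree
accepted by the learned schema every label occurs in the sample, by induction from the root.
Conversely, the least multiplicity only depends on which of `0`, `1` and `≥ 2` occur in `C`,
so a sample that contains, for each pair of labels and each of these three classes, one tree
of `L(S)` exhibiting it (if any does) yields the same rules as `L(S)` itself: a characteristic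
sample of at most `3 |Σ|²` trees. -/

section Multiplicities

theorem Mult.mem_sem_of_two_le {M : Mult} {j k : ℕ} (hj : j ∈ M.sem) (h2 : 2 ≤ j)
    (hk : 1 ≤ k) : k ∈ M.sem := by
  cases M <;> simp_all [Mult.sem]; omega

open Classical in
/-- The least multiplicity whose semantics contains `C` (for nonempty `C`). -/
noncomputable def Mult.hull (C : Set ℕ) : Mult :=
  if ∃ k ∈ C, 2 ≤ k then (if 0 ∈ C then .star else .plus)
  else if 1 ∈ C then (if 0 ∈ C then .opt else .one) else .zero

theorem Mult.mem_sem_hull_iff {C : Set ℕ} (hC : C.Nonempty) {k : ℕ} :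
    k ∈ (hull C).sem ↔ (k = 0 ∧ 0 ∈ C) ∨ (k = 1 ∧ 1 ∈ C) ∨ (1 ≤ k ∧ ∃ j ∈ C, 2 ≤ j) := by
  obtain ⟨j, hj⟩ := hC
  unfold hull
  split_ifs <;> simp only [sem, Set.mem_univ, Set.mem_ofPred_eq,
    Set.mem_insert_iff, Set.mem_singleton_iff] <;> grind

theorem Mult.subset_sem_hull (C : Set ℕ) : C ⊆ (hull C).sem := fun k hk => by
  rw [mem_sem_hull_iff ⟨k, hk⟩]
  rcases k with _ | _ | k
  · exact Or.inl ⟨rfl, hk⟩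
  · exact Or.inr (Or.inl ⟨rfl, hk⟩)
  · exact Or.inr (Or.inr ⟨by omega, _, hk, by omega⟩)

theorem Mult.sem_hull_subset {C : Set ℕ} {M : Mult} (hC : C.Nonempty) (h : C ⊆ M.sem) :
    (hull C).sem ⊆ M.sem := by
  intro k hk
  rcases (mem_sem_hull_iff hC).1 hk with ⟨rfl, h0⟩ | ⟨rfl, h1⟩ | ⟨hk1, j, hj, h2⟩
  · exact h h0
  · exact h h1
  · exact mem_sem_of_two_le (h hj) h2 hk1

theorem Mult.exists_pos_of_mem_sem_hull {C : Set ℕ} {k : ℕ} (hk : k ∈ (hull C).sem)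
    (hpos : 0 < k) : ∃ j ∈ C, 0 < j := by
  rcases C.eq_empty_or_nonempty with rfl | hC
  · simp [hull, sem] at hk
    omega
  · rcases (mem_sem_hull_iff hC).1 hk with ⟨rfl, -⟩ | ⟨-, h1⟩ | ⟨-, j, hj, h2⟩
    · omega
    · exact ⟨1, h1, one_pos⟩
    · exact ⟨j, hj, by omega⟩

theorem Mult.hull_congr {C C' : Set ℕ}
    (h : (fun k => min k 2) '' C = (fun k => min k 2) '' C') : hull C = hull C' := by
  have hsmall : ∀ {C : Set ℕ} {i : ℕ}, i < 2 → (i ∈ (fun k => min k 2) '' C ↔ i ∈ C) := by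
    intro C i hi
    simp only [Set.mem_image]
    refine ⟨fun ⟨k, hk, hki⟩ => ?_, fun hi' => ⟨i, hi', by omega⟩⟩
    rwa [show k = i by omega] at hk
  have hlarge : ∀ {C : Set ℕ}, 2 ∈ (fun k => min k 2) '' C ↔ ∃ k ∈ C, 2 ≤ k := by
    intro C
    simp only [Set.mem_image]
    exact ⟨fun ⟨k, hk, hk2⟩ => ⟨k, hk, by omega⟩, fun ⟨k, hk, hk2⟩ => ⟨k, hk, by omega⟩⟩
  have h0 : 0 ∈ C ↔ 0 ∈ C' := by rw [← hsmall two_pos, h, hsmall two_pos]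
  have h1 : 1 ∈ C ↔ 1 ∈ C' := by rw [← hsmall one_lt_two, h, hsmall one_lt_two]
  have h2 : (∃ k ∈ C, 2 ≤ k) ↔ ∃ k ∈ C', 2 ≤ k := by rw [← hlarge, h, hlarge]
  unfold hull
  rw [propext h0, propext h1, propext h2]

end Multiplicities

section Expressions

variable {α : Type}

open Classical in
/-- The multiplicity of `b` in `e`; a symbol without an entry has multiplicity `0`. -/
noncomputable def MExpr.mult (e : MExpr α) (b : α) : Mult :=
  if h : ∃ M, (b, M) ∈ e.entries then h.choose else .zero

theorem MExpr.mult_eq_of_mem {e : MExpr α} {b : α} {M : Mult} (h : (b, M) ∈ e.entries) :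
    e.mult b = M := by
  have hex : ∃ M, (b, M) ∈ e.entries := ⟨M, h⟩
  rw [mult, dif_pos hex]
  exact congrArg Prod.snd (List.inj_on_of_nodup_map e.distinct hex.choose_spec h rfl)

theorem MExpr.mult_eq_zero {e : MExpr α} {b : α} (h : b ∉ e.entries.map Prod.fst) :
    e.mult b = .zero :=
  dif_neg fun ⟨_, hM⟩ => h (List.mem_map.2 ⟨_, hM, rfl⟩)

theorem MExpr.mem_lang_iff [DecidableEq α] {e : MExpr α} {w : Multiset α} :
    w ∈ e.lang ↔ ∀ b, w.count b ∈ (e.mult b).sem := by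
  constructor
  · rintro ⟨hent, hout⟩ b
    by_cases hb : b ∈ e.entries.map Prod.fst
    · obtain ⟨⟨_, M⟩, hM, rfl⟩ := List.mem_map.1 hb
      rw [mult_eq_of_mem hM]
      exact hent _ hM
    · rw [mult_eq_zero hb]
      exact hout b hb
  · intro h
    refine ⟨fun p hp => ?_, fun b hb => ?_⟩
    · simpa only [mult_eq_of_mem hp] using h p.1
    · simpa only [mult_eq_zero hb, Mult.sem, Set.mem_singleton_iff] using h b

noncomputable def MExpr.ofMult [Fintype α] (m : α → Mult) : MExpr α where
  entries := Finset.univ.toList.map fun b => (b, m b)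
  distinct := by simpa [Function.comp_def] using Finset.univ.nodup_toList

theorem MExpr.mult_ofMult [Fintype α] (m : α → Mult) (b : α) : (ofMult m).mult b = m b :=
  mult_eq_of_mem (by simp [ofMult])

end Expressions

section Trees

variable {α : Type}

theorem UTree.node_induction {P : UTree α → Prop}
    (node : ∀ a ts, (∀ t ∈ ts, P t) → P (.node a ts)) : ∀ t, P t
  | .node a ts => node a ts fun t _ => node_induction node t

inductive UTree.IsSubtree : UTree α → UTree α → Prop
  | refl (t : UTree α) : IsSubtree t t
  | child {s t : UTree α} {b : α} {ts : List (UTree α)} :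
      t ∈ ts → IsSubtree s t → IsSubtree s (.node b ts)

theorem UTree.IsSubtree.trans {s t u : UTree α} (h₁ : IsSubtree s t) (h₂ : IsSubtree t u) :
    IsSubtree s u := by
  induction h₂ with
  | refl => exact h₁
  | child hmem _ ih => exact .child hmem ih

theorem UTree.IsSubtree.of_mem {t : UTree α} {b : α} {ts : List (UTree α)} (h : t ∈ ts) :
    IsSubtree t (.node b ts) :=
  .child h (.refl t)

abbrev childLabels (ts : List (UTree α)) : Multiset α := (ts.map UTree.label : List α)

def nodeLabels (T : Set (UTree α)) : Set α :=
  {a | ∃ t ∈ T, ∃ cs, UTree.IsSubtree (.node a cs) t}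

theorem label_mem_nodeLabels {T : Set (UTree α)} {t : UTree α} (ht : t ∈ T) :
    t.label ∈ nodeLabels T := by
  cases t with
  | node a cs => exact ⟨_, ht, cs, .refl _⟩

variable [DecidableEq α]

theorem msat_iff_forall_isSubtree {R : α → MExpr α} {t : UTree α} :
    UTree.MSat R t ↔ ∀ a cs, UTree.IsSubtree (.node a cs) t → childLabels cs ∈ (R a).lang := by
  constructor
  · intro h a cs hsub
    induction hsub with
    | refl => cases h; assumption
    | child hmem _ ih => cases h with | node _ _ _ hch => exact ih (hch _ hmem)
  · induction t using UTree.node_induction with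
    | node a ts ih =>
      intro h
      exact .node a ts (h a ts (.refl _)) fun t ht =>
        ih t ht fun b cs hsub => h b cs (hsub.trans (.of_mem ht))

def childCounts (a b : α) (T : Set (UTree α)) : Set ℕ :=
  {k | ∃ t ∈ T, ∃ cs, UTree.IsSubtree (.node a cs) t ∧ (childLabels cs).count b = k}

theorem childCounts_mono {a b : α} {T T' : Set (UTree α)} (h : T ⊆ T') :
    childCounts a b T ⊆ childCounts a b T' :=
  fun _ ⟨t, ht, hk⟩ => ⟨t, h ht, hk⟩

theorem mem_nodeLabels_of_pos_mem_childCounts {a b : α} {T : Set (UTree α)} {k : ℕ}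
    (hk : k ∈ childCounts a b T) (hpos : 0 < k) : b ∈ nodeLabels T := by
  obtain ⟨t, ht, cs, hsub, rfl⟩ := hk
  obtain ⟨u, hu, rfl⟩ := List.mem_map.1 (Multiset.count_pos.1 hpos)
  cases u with
  | node c cs' => exact ⟨t, ht, cs', (UTree.IsSubtree.of_mem hu).trans hsub⟩

end Trees

section Learning

variable {α : Type} [DecidableEq α] [Fintype α]

noncomputable def learnRules (D : Set (UTree α)) (a : α) : MExpr α :=
  .ofMult fun b => Mult.hull (childCounts a b D)

theorem mem_learnRules_lang_iff {D : Set (UTree α)} {a : α} {w : Multiset α} :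
    w ∈ (learnRules D a).lang ↔ ∀ b, w.count b ∈ (Mult.hull (childCounts a b D)).sem := by
  simp only [learnRules, MExpr.mem_lang_iff, MExpr.mult_ofMult]

theorem msat_learnRules_of_mem {D : Set (UTree α)} {t : UTree α} (ht : t ∈ D) :
    UTree.MSat (learnRules D) t :=
  msat_iff_forall_isSubtree.2 fun _ cs hsub => mem_learnRules_lang_iff.2 fun _ =>
    Mult.subset_sem_hull _ ⟨t, ht, cs, hsub, rfl⟩

theorem learnRules_lang_subset {R : α → MExpr α} {D : Set (UTree α)}
    (hD : ∀ t ∈ D, UTree.MSat R t) {a : α} (ha : a ∈ nodeLabels D) :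
    (learnRules D a).lang ⊆ (R a).lang := by
  obtain ⟨t, ht, cs, hsub⟩ := ha
  intro w hw
  rw [MExpr.mem_lang_iff]
  intro b
  have hne : (childCounts a b D).Nonempty := ⟨_, t, ht, cs, hsub, rfl⟩
  refine Mult.sem_hull_subset hne ?_ (mem_learnRules_lang_iff.1 hw b)
  rintro _ ⟨u, hu, cs', hsub', rfl⟩
  exact MExpr.mem_lang_iff.1 (msat_iff_forall_isSubtree.1 (hD u hu) a cs' hsub') b

theorem label_mem_nodeLabels_of_isSubtree {D : Set (UTree α)} {s t : UTree α}
    (hsub : UTree.IsSubtree s t) (ht : UTree.MSat (learnRules D) t)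
    (hroot : t.label ∈ nodeLabels D) : s.label ∈ nodeLabels D := by
  induction hsub with
  | refl => exact hroot
  | @child u b ts hmem _ ih =>
    cases ht with
    | node _ _ hrule hch =>
      refine ih (hch u hmem) ?_
      have hpos : 0 < (childLabels ts).count u.label :=
        Multiset.count_pos.2 (List.mem_map_of_mem hmem)
      obtain ⟨j, hj, hjpos⟩ :=
        Mult.exists_pos_of_mem_sem_hull (mem_learnRules_lang_iff.1 hrule u.label) hpos
      exact mem_nodeLabels_of_pos_mem_childCounts hj hjpos

theorem msat_of_msat_learnRules {R : α → MExpr α} {D : Set (UTree α)}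
    (hD : ∀ t ∈ D, UTree.MSat R t) {t : UTree α} (ht : UTree.MSat (learnRules D) t)
    (hroot : t.label ∈ nodeLabels D) : UTree.MSat R t :=
  msat_iff_forall_isSubtree.2 fun a cs hsub =>
    learnRules_lang_subset hD (label_mem_nodeLabels_of_isSubtree hsub ht hroot)
      (msat_iff_forall_isSubtree.1 ht a cs hsub)

/-- By `Mult.hull_congr`, these are the only features of a sample that the learner sees. -/
def HasFeature (x : α × α × Fin 3) (t : UTree α) : Prop :=
  (x.2.2 : ℕ) ∈ (fun k => min k 2) '' childCounts x.1 x.2.1 {t}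

theorem learnRules_eq_of_hasFeature {D T : Set (UTree α)} (hDT : D ⊆ T)
    (hfeat : ∀ x, (∃ t ∈ T, HasFeature x t) → ∃ t ∈ D, HasFeature x t) :
    learnRules D = learnRules T := by
  funext a
  show MExpr.ofMult _ = MExpr.ofMult _
  congr 1
  funext b
  refine Mult.hull_congr (Set.Subset.antisymm (Set.image_mono (childCounts_mono hDT)) ?_)
  rintro _ ⟨k, ⟨t, ht, hk⟩, rfl⟩
  obtain ⟨t', ht', k', hk', hk'eq⟩ :=
    hfeat (a, b, ⟨min k 2, by omega⟩) ⟨t, ht, k, ⟨t, rfl, hk⟩, rfl⟩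
  exact ⟨k', childCounts_mono (Set.singleton_subset_iff.2 ht') hk', hk'eq⟩

theorem exists_finset_witnesses {ι X : Type} [Fintype ι] (L : Set X) (Q : ι → X → Prop) :
    ∃ W : Finset X, ↑W ⊆ L ∧ W.card ≤ Fintype.card ι ∧
      ∀ i, (∃ x ∈ L, Q i x) → ∃ x ∈ W, Q i x := by
  classical
  let I := Finset.univ.filter fun i => ∃ x ∈ L, Q i x
  have hI : ∀ i : I, ∃ x ∈ L, Q i x := fun i => (Finset.mem_filter.1 i.2).2
  refine ⟨I.attach.image fun i => (hI i).choose, ?_, ?_, ?_⟩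
  · intro x hx
    obtain ⟨i, -, rfl⟩ := Finset.mem_image.1 (Finset.mem_coe.1 hx)
    exact (hI i).choose_spec.1
  · exact Finset.card_image_le.trans ((Finset.card_attach).trans_le (Finset.card_filter_le _ _))
  · intro i hi
    have hiI : i ∈ I := Finset.mem_filter.2 ⟨Finset.mem_univ i, hi⟩
    exact ⟨_, Finset.mem_image_of_mem _ (Finset.mem_attach I ⟨i, hiI⟩),
      (hI ⟨i, hiI⟩).choose_spec.2⟩

noncomputable def learner (D : TreeSample α) : MS α :=
  ⟨D.2.2.choose, learnRules D.1⟩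

theorem learner_lang_eq {S : MS α} {D : Finset (UTree α)} (hne : D.Nonempty)
    (hr : ∃ r : α, ∀ t ∈ D, t.label = r) (hDS : ↑D ⊆ S.lang)
    (hrules : learnRules ↑D = learnRules S.lang) :
    (learner ⟨D, hne, hr⟩).lang = S.lang := by
  have ⟨t₀, ht₀⟩ := hne
  have hroot : hr.choose = S.root := (hr.choose_spec t₀ ht₀).symm.trans (hDS ht₀).1
  ext t
  constructor
  · rintro ⟨hl, hm⟩
    refine ⟨hl.trans hroot, msat_of_msat_learnRules (fun u hu => (hDS hu).2) hm ?_⟩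
    rw [hl]
    change hr.choose ∈ _
    rw [← hr.choose_spec t₀ ht₀]
    exact label_mem_nodeLabels ht₀
  · rintro ⟨hl, hm⟩
    refine ⟨hl.trans hroot.symm, ?_⟩
    change UTree.MSat (learnRules ↑D) t
    rw [hrules]
    exact msat_learnRules_of_mem ⟨hl, hm⟩

end Learning

/-- The class MS is learnable from positive examples. -/
theorem ms_learnable_from_positive :
    ∃ p : Polynomial ℕ,
      ∀ (α : Type) [Fintype α] [DecidableEq α],
        ∃ learner : TreeSample α → MS α,
          (∀ D : TreeSample α, ↑D.val ⊆ (learner D).lang) ∧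
          (∀ S : MS α, ∃ CS : Finset (UTree α),
              ↑CS ⊆ S.lang ∧ CS.card ≤ p.eval (Fintype.card α) ∧
              ∀ (D : Finset (UTree α)) (hne : D.Nonempty)
                (hr : ∃ r : α, ∀ t ∈ D, t.label = r),
                CS ⊆ D → ↑D ⊆ S.lang →
                (learner ⟨D, hne, hr⟩).lang = S.lang) := by
  refine ⟨3 * Polynomial.X ^ 2, fun α _ _ => ⟨learner, ?_, fun S => ?_⟩⟩
  · intro D t ht
    exact ⟨D.2.2.choose_spec t ht, msat_learnRules_of_mem ht⟩
  · obtain ⟨CS, hCS, hcard, hwit⟩ := exists_finset_witnesses S.lang (HasFeature (α := α))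
    refine ⟨CS, hCS, ?_, fun D hne hr hCSD hDS => learner_lang_eq hne hr hDS
      (learnRules_eq_of_hasFeature hDS fun x hx => ?_)⟩
    · refine hcard.trans (le_of_eq ?_)
      simp only [Fintype.card_prod, Fintype.card_fin, Polynomial.eval_mul, Polynomial.eval_pow,
        Polynomial.eval_X, Polynomial.eval_ofNat]
      ring
    · obtain ⟨t, ht, hxt⟩ := hwit x hx
      exact ⟨t, hCSD ht, hxt⟩

end LSXML
end

section
/- For every n > 1, consider the alphabet Σ = {r, a₁, b₁, …, a_n, b_n} and the DMS S with root label r and rules r → a₁ ∥ b₁; a_i → a_{i+1} ∥ b_{i+1} and b_i → a_{i+1} ∥ b_{i+1} for 1 ≤ i < n; and a_n → ε, b_n → ε. Then L(S) contains exactly one tree, and that tree has exactly 2^{n+1} − 1 nodes; in particular the size of the smallest tree satisfying S is exponential in the size of the alphabet. -/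
/-!
Every rule of `expDMS n` admits exactly one word, so the schema is deterministic: each node
labelled `x` must have exactly the children `expKids n x`. Hence a satisfying tree is, up to
reordering siblings, the unfolding of `expKids` from the root (which terminates because the depth
increases), and the sizes of its subtrees obey `s x = 1 + ∑ s y` over the children `y` of `x`,
solved by `s x = 2 ^ (n + 1 - depth x) - 1`.
-/

namespace LSXML

/-- Number of nodes of a tree. -/
def UTree.size {α : Type} : UTree α → ℕ
  | .node _ ts => 1 + (ts.attach.map fun t => UTree.size t.1).sum
decreasing_by
  have := List.sizeOf_lt_of_mem t.2
  simp only [UTree.node.sizeOf_spec]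
  omega

/-- Equality of trees as *unordered* trees: same root label and children lists
related, up to permutation, by pairing equivalent subtrees. -/
inductive TEquiv {α : Type} : UTree α → UTree α → Prop
  | node (a : α) (ts vs us : List (UTree α)) :
      List.Forall₂ TEquiv ts vs → vs.Perm us →
      TEquiv (UTree.node a ts) (UTree.node a us)

/-- The DME `a ∥ b` (for distinct symbols `a`, `b`). -/
def pairDME {α : Type} (a b : α) (h : a ≠ b) : DME α where
  factors := [([(a, Mult.one)], Mult.one), ([(b, Mult.one)], Mult.one)]
  nonemptyDisj := by intro d hd; simp at hd; rcases hd with rfl | rfl <;> simp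
  distinct := by simp [h]

/-- The DME with language `{ε}` (the rule `a → ε`). -/
def epsDME {α : Type} : DME α where
  factors := []
  nonemptyDisj := by simp
  distinct := by simp

/-- The alphabet `Σ = {r, a₁, b₁, …, a_n, b_n}` (0-indexed): `none` is `r` and
`some (i, true)`, `some (i, false)` are `a_{i+1}`, `b_{i+1}`. -/
abbrev ExpSym (n : ℕ) := Option (Fin n × Bool)

/-- The DMS with rules `r → a₁ ∥ b₁`; `a_i → a_{i+1} ∥ b_{i+1}`,
`b_i → a_{i+1} ∥ b_{i+1}` for `1 ≤ i < n`; `a_n → ε`, `b_n → ε`. -/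
def expDMS (n : ℕ) (hn : 1 < n) : DMS (ExpSym n) where
  root := none
  rules := fun x =>
    match x with
    | none =>
        pairDME (some (⟨0, by omega⟩, true)) (some (⟨0, by omega⟩, false)) (by simp)
    | some (i, _) =>
        if h : (i : ℕ) + 1 < n then
          pairDME (some (⟨(i : ℕ) + 1, h⟩, true)) (some (⟨(i : ℕ) + 1, h⟩, false))
            (by simp)
        else epsDME

theorem powLang_one {α : Type} (L : Set (Multiset α)) : powLang L .one = L := by
  ext w
  simp only [powLang, Mult.sem, Set.mem_singleton_iff, List.length_eq_one_iff, Set.mem_ofPred_eq]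
  constructor
  · rintro ⟨_, ⟨u, rfl⟩, hu, rfl⟩
    simpa using hu
  · exact fun hw => ⟨[w], ⟨w, rfl⟩, by simpa using hw, by simp⟩

theorem disjLang_singleton {α : Type} (a : α) (M : Mult) :
    disjLang [(a, M)] = atomLang a M := by
  simp [disjLang]

theorem atomLang_one {α : Type} (a : α) : atomLang a .one = {{a}} := by
  simp [atomLang, Mult.sem]

theorem lang_pairDME {α : Type} {a b : α} (h : a ≠ b) :
    (pairDME a b h).lang = {a ::ₘ {b}} := by
  ext w
  simp [DME.lang, pairDME, concatLang, powLang_one, disjLang_singleton, atomLang_one,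
    Multiset.singleton_add]

theorem lang_epsDME {α : Type} : (epsDME (α := α)).lang = {0} := rfl

theorem UTree.size_node {α : Type} (a : α) (ts : List (UTree α)) :
    (UTree.node a ts).size = 1 + (ts.map UTree.size).sum := by
  rw [UTree.size, List.attach_map_val]

section Unfolding

variable {α : Type} (kids : α → List α) (rank : α → ℕ)

def UTree.unfold (hrank : ∀ a, ∀ b ∈ kids a, rank b < rank a) (a : α) : UTree α :=
  .node a ((kids a).attach.map fun b => UTree.unfold hrank b.1)
termination_by rank a
decreasing_by exact hrank a b.1 b.2

variable {kids rank}

theorem UTree.unfold_eq (hrank : ∀ a, ∀ b ∈ kids a, rank b < rank a) (a : α) :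
    UTree.unfold kids rank hrank a = .node a ((kids a).map (UTree.unfold kids rank hrank)) := by
  rw [UTree.unfold, List.attach_map_val]

@[simp]
theorem UTree.label_unfold (hrank : ∀ a, ∀ b ∈ kids a, rank b < rank a) (a : α) :
    (UTree.unfold kids rank hrank a).label = a := by
  rw [UTree.unfold_eq, UTree.label]

theorem UTree.sat_unfold {R : α → DME α} (hR : ∀ a, ((kids a : List α) : Multiset α) ∈ (R a).lang)
    (hrank : ∀ a, ∀ b ∈ kids a, rank b < rank a) (a : α) :
    UTree.Sat R (UTree.unfold kids rank hrank a) := by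
  induction a using UTree.unfold.induct kids rank hrank with
  | case1 a ih =>
    rw [UTree.unfold_eq]
    refine .node a _ ?_ ?_
    · simpa [List.map_map, Function.comp_def] using hR a
    · simp only [List.mem_map]
      rintro _ ⟨b, hb, rfl⟩
      exact ih ⟨b, hb⟩

theorem UTree.Sat.tequiv_unfold {R : α → DME α}
    (hR : ∀ a, ∀ w ∈ (R a).lang, w = (kids a : Multiset α))
    (hrank : ∀ a, ∀ b ∈ kids a, rank b < rank a) {t : UTree α} (ht : UTree.Sat R t) :
    TEquiv t (UTree.unfold kids rank hrank t.label) := by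
  induction ht with
  | node a ts hts _ ih =>
    rw [UTree.label, UTree.unfold_eq]
    refine .node a ts ((ts.map UTree.label).map (UTree.unfold kids rank hrank)) _ ?_ ?_
    · rw [List.map_map, List.forall₂_map_right_iff]
      exact List.forall₂_same.mpr ih
    · exact (Multiset.coe_eq_coe.mp (hR a _ hts)).map _

theorem UTree.Sat.size_eq {R : α → DME α}
    (hR : ∀ a, ∀ w ∈ (R a).lang, w = (kids a : Multiset α))
    (f : α → ℕ) (hf : ∀ a, f a = 1 + ((kids a).map f).sum) {t : UTree α}
    (ht : UTree.Sat R t) : t.size = f t.label := by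
  induction ht with
  | node a ts hts _ ih =>
    have hperm := (Multiset.coe_eq_coe.mp (hR a _ hts)).map f
    rw [List.map_map] at hperm
    rw [UTree.size_node, UTree.label, hf, List.map_congr_left ih, ← Function.comp_def,
      hperm.sum_eq]

end Unfolding

section ExpDMS

variable {n : ℕ}

-- the depth of a symbol in the tree: `r` has depth 0 and `a_i`, `b_i` have depth `i`
def expLevel : ExpSym n → ℕ
  | none => 0
  | some (i, _) => i + 1

@[simp]
theorem expLevel_some (i : Fin n) (b : Bool) : expLevel (some (i, b)) = i + 1 := rfl

theorem expLevel_le (x : ExpSym n) : expLevel x ≤ n := by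
  rcases x with _ | ⟨i, _⟩
  · exact Nat.zero_le n
  · exact i.isLt

variable (n)

def expKids (x : ExpSym n) : List (ExpSym n) :=
  if h : expLevel x < n then [some (⟨expLevel x, h⟩, true), some (⟨expLevel x, h⟩, false)]
  else []

def expSize (x : ExpSym n) : ℕ := 2 ^ (n + 1 - expLevel x) - 1

theorem expLevel_of_mem_expKids {x y : ExpSym n} (hy : y ∈ expKids n x) :
    expLevel x < n ∧ expLevel y = expLevel x + 1 := by
  unfold expKids at hy
  split at hy
  · simp only [List.mem_cons, List.not_mem_nil, or_false] at hy
    rcases hy with rfl | rfl <;> exact ⟨‹_›, rfl⟩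
  · simp at hy

theorem expKids_rank_lt (x y : ExpSym n) (hy : y ∈ expKids n x) :
    n - expLevel y < n - expLevel x := by
  have := expLevel_of_mem_expKids n hy
  omega

theorem expSize_eq (x : ExpSym n) : expSize n x = 1 + ((expKids n x).map (expSize n)).sum := by
  unfold expKids expSize
  split
  case isTrue h =>
    have hk : n + 1 - expLevel x = (n - expLevel x) + 1 := by omega
    have := Nat.one_le_two_pow (n := n - expLevel x)
    simp only [expLevel_some, List.map_cons, List.map_nil, List.sum_cons, List.sum_nil,
      Nat.add_sub_add_right, hk, pow_succ]
    omega
  case isFalse h =>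
    have : expLevel x = n := le_antisymm (expLevel_le x) (not_lt.mp h)
    simp [this]

theorem lang_expDMS_rules (hn : 1 < n) (x : ExpSym n) :
    ((expDMS n hn).rules x).lang = {(expKids n x : Multiset (ExpSym n))} := by
  rcases x with _ | ⟨i, b⟩
  · simp [expDMS, expKids, expLevel, Nat.zero_lt_of_lt hn, lang_pairDME]
    rfl
  · by_cases h : (i : ℕ) + 1 < n
    · simp [expDMS, expKids, h, lang_pairDME]
      rfl
    · simp [expDMS, expKids, expLevel, h, lang_epsDME]

end ExpDMS

/-- The language of the schema `expDMS n` contains exactly one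
tree (as an unordered tree, i.e. up to `TEquiv`), and that tree has exactly
`2 ^ (n + 1) - 1` nodes — exponentially many in the size `2 * n + 1` of the
alphabet. -/
theorem expDMS_unique_exponential_tree (n : ℕ) (hn : 1 < n) :
    ∃ t : UTree (ExpSym n), t ∈ (expDMS n hn).lang ∧
      (∀ t' ∈ (expDMS n hn).lang, TEquiv t' t) ∧
      UTree.size t = 2 ^ (n + 1) - 1 ∧
      ∀ t' ∈ (expDMS n hn).lang, UTree.size t' = 2 ^ (n + 1) - 1 := by
  have hR := lang_expDMS_rules n hn
  have hdet : ∀ x, ∀ w ∈ ((expDMS n hn).rules x).lang, w = expKids n x := by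
    intro x w hw
    rwa [hR] at hw
  have hrank := expKids_rank_lt n
  have hsize : ∀ t ∈ (expDMS n hn).lang, t.size = 2 ^ (n + 1) - 1 := by
    rintro t ⟨hroot, ht⟩
    rw [ht.size_eq hdet (expSize n) (expSize_eq n), hroot]
    rfl
  have hmem : UTree.unfold (expKids n) _ hrank none ∈ (expDMS n hn).lang :=
    ⟨UTree.label_unfold hrank none, UTree.sat_unfold (fun x => (hR x).symm ▸ rfl) hrank none⟩
  refine ⟨_, hmem, ?_, hsize _ hmem, hsize⟩
  rintro t ⟨hroot, ht⟩
  have := ht.tequiv_unfold hdet hrank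
  rwa [hroot] at this

end LSXML
end

section
/- Two disjunctive multiplicity expressions E₁ and E₂ over a finite alphabet Σ have equal languages, L(E₁) = L(E₂), if and only if they have equal characterizing triples, i.e., C_{E₁} = C_{E₂}, N_{E₁} = N_{E₂}, and P_{E₁} = P_{E₂}. -/
namespace LSXML

/-- The set `C_E` of conflicting pairs of siblings of a DME `E`. -/
def Ctrip {α : Type} (E : DME α) : Set (α × α) :=
  {p | ¬ ∃ w ∈ E.lang, p.1 ∈ w ∧ p.2 ∈ w}

/-- The extended cardinality map `N_E` of a DME `E`. -/
def Ntrip {α : Type} [DecidableEq α] (E : DME α) : Set (α × ℕ) :=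
  {p | ∃ w ∈ E.lang, w.count p.1 = p.2}

/-- The sets `P_E` of required symbols of a DME `E`. -/
def Ptrip {α : Type} (E : DME α) : Set (Set α) :=
  {X | ∀ w ∈ E.lang, ∃ a ∈ X, a ∈ w}

/-!
Every word allowed by the triple of `E` (each of its letter counts occurs in `L(E)`, each
pair of its letters co-occurs in a word of `L(E)`, and it meets every required set) lies
in `L(E)`. For a single factor `D^M` this holds because under `*` and `+` a word is the sum
of its single-letter parts, each the single-letter part of a word of `L(D^M)` with the same
count, while under `?`, `1`, `0` every word uses one letter and is fixed by its count; the
empty word is allowed only if it is in the language, since otherwise `Σ` is required. The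
property survives concatenation of languages over disjoint alphabets, as a word splits
into its restrictions to the two alphabets, and the factors of a DME have disjoint alphabets.
-/

open scoped Pointwise

section TripleHull

variable {α : Type} [DecidableEq α]

/-- The words allowed by the characterizing triple of `L`; the triple determines `L` exactly
when `tripleHull L ⊆ L`. -/
def tripleHull (L : Set (Multiset α)) : Set (Multiset α) :=
  {w | (∀ a, ∃ u ∈ L, u.count a = w.count a) ∧
    (∀ a ∈ w, ∀ b ∈ w, ∃ u ∈ L, a ∈ u ∧ b ∈ u) ∧
    ∀ X : Set α, (∀ u ∈ L, ∃ a ∈ X, a ∈ u) → ∃ a ∈ X, a ∈ w}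

theorem subset_tripleHull (L : Set (Multiset α)) : L ⊆ tripleHull L := fun w hw =>
  ⟨fun _ => ⟨w, hw, rfl⟩, fun _ ha _ hb => ⟨w, hw, ha, hb⟩, fun _ hX => hX w hw⟩

theorem zero_mem_of_zero_mem_tripleHull {L : Set (Multiset α)} (h : 0 ∈ tripleHull L) :
    (0 : Multiset α) ∈ L := by
  by_contra h0
  have huniv : ∀ u ∈ L, ∃ a ∈ (Set.univ : Set α), a ∈ u := fun u hu =>
    (Multiset.exists_mem_of_ne_zero (ne_of_mem_of_not_mem hu h0)).imp fun _ ha => ⟨trivial, ha⟩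
  obtain ⟨a, -, ha⟩ := h.2.2 Set.univ huniv
  exact Multiset.notMem_zero a ha

end TripleHull

section Unary

variable {α : Type}

def Unary (u : Multiset α) : Prop := ∀ a ∈ u, ∀ b ∈ u, a = b

theorem Unary.eq_replicate_count [DecidableEq α] {u : Multiset α} (hu : Unary u) {a : α}
    (ha : a ∈ u) : u = Multiset.replicate (u.count a) a := by
  rw [← Multiset.filter_eq', Multiset.filter_eq_self.2 fun b hb => hu b hb a ha]

theorem Unary.filter_eq_self_or_zero {u : Multiset α} (hu : Unary u) (p : α → Prop)
    [DecidablePred p] : u.filter p = u ∨ u.filter p = 0 := by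
  by_cases h : ∀ a ∈ u, p a
  · exact Or.inl (Multiset.filter_eq_self.2 h)
  · push Not at h
    obtain ⟨a, ha, hpa⟩ := h
    exact Or.inr (Multiset.filter_eq_nil.2 fun b hb => hu a ha b hb ▸ hpa)

theorem tripleHull_subset_of_unary [DecidableEq α] {L : Set (Multiset α)}
    (hL : ∀ u ∈ L, Unary u) : tripleHull L ⊆ L := by
  rintro w ⟨hcount, hpair, hreq⟩
  rcases eq_or_ne w 0 with rfl | hw0
  · exact zero_mem_of_zero_mem_tripleHull ⟨hcount, hpair, hreq⟩
  obtain ⟨a, ha⟩ := Multiset.exists_mem_of_ne_zero hw0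
  have hw : Unary w := fun b hb c hc => by
    obtain ⟨u, hu, hbu, hcu⟩ := hpair b hb c hc
    exact hL u hu b hbu c hcu
  obtain ⟨u, hu, hua⟩ := hcount a
  have hau : a ∈ u := Multiset.count_pos.1 (hua ▸ Multiset.count_pos.2 ha)
  rwa [hw.eq_replicate_count ha, ← hua, ← (hL u hu).eq_replicate_count hau]

end Unary

section PowLang

variable {α : Type} {L : Set (Multiset α)}

theorem powLang_induction {M : Mult} (P : Multiset α → Prop) (zero : P 0)
    (add : ∀ u v, P u → P v → P (u + v)) (mem : ∀ u ∈ L, P u) :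
    ∀ w ∈ powLang L M, P w := by
  rintro _ ⟨ws, -, hws, rfl⟩
  exact List.sum_induction P add zero fun u hu => mem u (hws u hu)

theorem zero_mem_powLang_star : (0 : Multiset α) ∈ powLang L .star :=
  ⟨[], trivial, by simp, rfl⟩

theorem mem_powLang_star_of_mem {u : Multiset α} (hu : u ∈ L) : u ∈ powLang L .star :=
  ⟨[u], trivial, by simpa using hu, by simp⟩

theorem add_mem_powLang_star {u v : Multiset α} (hu : u ∈ powLang L .star)
    (hv : v ∈ powLang L .star) : u + v ∈ powLang L .star := by
  obtain ⟨us, -, hus, rfl⟩ := hu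
  obtain ⟨vs, -, hvs, rfl⟩ := hv
  refine ⟨us ++ vs, trivial, fun x hx => ?_, List.sum_append.symm⟩
  exact (List.mem_append.1 hx).elim (hus x) (hvs x)

theorem powLang_plus_subset_star : powLang L .plus ⊆ powLang L .star :=
  fun _ ⟨ws, _, hws, hw⟩ => ⟨ws, trivial, hws, hw⟩

theorem filter_mem_powLang_star (hL : ∀ u ∈ L, Unary u) (p : α → Prop) [DecidablePred p]
    {w : Multiset α} (hw : w ∈ powLang L .star) : w.filter p ∈ powLang L .star := by
  refine powLang_induction (fun w => w.filter p ∈ powLang L .star) ?_ ?_ ?_ w hw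
  · simpa using zero_mem_powLang_star
  · intro u v hu hv
    rw [Multiset.filter_add]
    exact add_mem_powLang_star hu hv
  · intro u hu
    rcases (hL u hu).filter_eq_self_or_zero p with h | h <;> rw [h]
    · exact mem_powLang_star_of_mem hu
    · exact zero_mem_powLang_star

/-- Under `*`, a word is the sum of its single-letter parts, and the `a`-part of `w` is the
`a`-part of any word of the language with as many `a`'s as `w`. -/
theorem mem_powLang_star_of_count [DecidableEq α] (hL : ∀ u ∈ L, Unary u) {w : Multiset α}
    (hw : ∀ a, ∃ u ∈ powLang L .star, u.count a = w.count a) : w ∈ powLang L .star := by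
  rw [← Multiset.toFinset_sum_count_nsmul_eq w]
  refine Finset.sum_induction _ (· ∈ powLang L .star) (fun _ _ => add_mem_powLang_star)
    zero_mem_powLang_star fun a _ => ?_
  obtain ⟨u, hu, hua⟩ := hw a
  rw [Multiset.nsmul_singleton, ← hua, ← Multiset.filter_eq']
  exact filter_mem_powLang_star hL _ hu

theorem unary_of_mem_powLang (hL : ∀ u ∈ L, Unary u) {M : Mult} (hM : M.sem ⊆ {0, 1})
    {w : Multiset α} (hw : w ∈ powLang L M) : Unary w := by
  obtain ⟨ws, hlen, hws, rfl⟩ := hw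
  match ws, hM hlen with
  | [], _ => simp [Unary]
  | [u], _ => simpa using hL u (hws u (by simp))
  | _ :: _ :: _, h => simp at h

theorem tripleHull_powLang_subset [DecidableEq α] (hL : ∀ u ∈ L, Unary u) (M : Mult) :
    tripleHull (powLang L M) ⊆ powLang L M := by
  cases M with
  | star => exact fun w hw => mem_powLang_star_of_count hL hw.1
  | plus =>
    intro w hw
    rcases eq_or_ne w 0 with rfl | hw0
    · exact zero_mem_of_zero_mem_tripleHull hw
    have hcount a : ∃ u ∈ powLang L .star, u.count a = w.count a :=
      (hw.1 a).imp fun _ hu => ⟨powLang_plus_subset_star hu.1, hu.2⟩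
    obtain ⟨ws, -, hws, rfl⟩ := mem_powLang_star_of_count hL hcount
    exact ⟨ws, List.length_pos_of_ne_nil (by rintro rfl; exact hw0 rfl), hws, rfl⟩
  | opt | one | zero =>
    exact tripleHull_subset_of_unary fun _ => unary_of_mem_powLang hL (by simp [Mult.sem])

end PowLang

section Concat

variable {α : Type} {L₁ L₂ : Set (Multiset α)} (p : α → Prop) [DecidablePred p]

theorem filter_add_eq_left {u₁ u₂ : Multiset α} (h₁ : ∀ a ∈ u₁, p a)
    (h₂ : ∀ a ∈ u₂, ¬ p a) : (u₁ + u₂).filter p = u₁ := by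
  rw [Multiset.filter_add, Multiset.filter_eq_self.2 h₁, Multiset.filter_eq_nil.2 h₂, add_zero]

theorem filter_mem_of_mem_tripleHull_add [DecidableEq α] (h₁ : ∀ u ∈ L₁, ∀ a ∈ u, p a)
    (h₂ : ∀ u ∈ L₂, ∀ a ∈ u, ¬ p a) (hL₁ : tripleHull L₁ ⊆ L₁) {w : Multiset α}
    (hw : w ∈ tripleHull (L₁ + L₂)) : w.filter p ∈ L₁ := by
  obtain ⟨hcount, hpair, hreq⟩ := hw
  refine hL₁ ⟨fun a => ?_, fun a ha b hb => ?_, fun X hX => ?_⟩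
  · obtain ⟨_, ⟨u₁, hu₁, u₂, hu₂, rfl⟩, hu⟩ := hcount a
    refine ⟨u₁, hu₁, ?_⟩
    rw [← filter_add_eq_left p (h₁ u₁ hu₁) (h₂ u₂ hu₂), Multiset.count_filter,
      Multiset.count_filter, hu]
  · rw [Multiset.mem_filter] at ha hb
    obtain ⟨_, ⟨u₁, hu₁, u₂, hu₂, rfl⟩, hau, hbu⟩ := hpair a ha.1 b hb.1
    have hu := filter_add_eq_left p (h₁ u₁ hu₁) (h₂ u₂ hu₂)
    exact ⟨u₁, hu₁, hu ▸ Multiset.mem_filter.2 ⟨hau, ha.2⟩,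
      hu ▸ Multiset.mem_filter.2 ⟨hbu, hb.2⟩⟩
  · -- the `p`-part of `X` is required in `L₁ + L₂`
    obtain ⟨a, ⟨haX, hpa⟩, haw⟩ := hreq {a | a ∈ X ∧ p a} <| by
      rintro _ ⟨u₁, hu₁, u₂, -, rfl⟩
      obtain ⟨a, haX, hau⟩ := hX u₁ hu₁
      exact ⟨a, ⟨haX, h₁ u₁ hu₁ a hau⟩, Multiset.mem_add.2 (Or.inl hau)⟩
    exact ⟨a, haX, Multiset.mem_filter.2 ⟨haw, hpa⟩⟩

theorem tripleHull_add_subset [DecidableEq α] (h₁ : ∀ u ∈ L₁, ∀ a ∈ u, p a)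
    (h₂ : ∀ u ∈ L₂, ∀ a ∈ u, ¬ p a) (hL₁ : tripleHull L₁ ⊆ L₁)
    (hL₂ : tripleHull L₂ ⊆ L₂) :
    tripleHull (L₁ + L₂) ⊆ L₁ + L₂ := fun w hw =>
  have hw' : w ∈ tripleHull (L₂ + L₁) := add_comm L₁ L₂ ▸ hw
  ⟨_, filter_mem_of_mem_tripleHull_add p h₁ h₂ hL₁ hw,
    _, filter_mem_of_mem_tripleHull_add (¬ p ·) h₂ (fun u hu a ha => not_not.2 (h₁ u hu a ha))
      hL₂ hw',
    Multiset.filter_add_not p w⟩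

end Concat

section DMELang

variable {α : Type}

def factorLang (d : List (α × Mult) × Mult) : Set (Multiset α) :=
  powLang (disjLang d.1) d.2

def factorSymbols (d : List (α × Mult) × Mult) : List α :=
  d.1.map Prod.fst

theorem concatLang_cons (L : Set (Multiset α)) (Ls : List (Set (Multiset α))) :
    concatLang (L :: Ls) = L + concatLang Ls := by
  ext w
  simp [concatLang, Set.mem_add, eq_comm]

theorem unary_of_mem_disjLang {d : List (α × Mult)} {u : Multiset α} (hu : u ∈ disjLang d) :
    Unary u := by
  obtain ⟨_, -, _, -, rfl⟩ := hu
  exact fun _ ha _ hb =>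
    (Multiset.eq_of_mem_replicate ha).trans (Multiset.eq_of_mem_replicate hb).symm

theorem mem_factorSymbols_of_mem {d : List (α × Mult) × Mult} {u : Multiset α}
    (hu : u ∈ factorLang d) {a : α} (ha : a ∈ u) : a ∈ factorSymbols d := by
  refine powLang_induction (fun u => ∀ a ∈ u, a ∈ factorSymbols d) (by simp) ?_ ?_ u hu a ha
  · exact fun u v hu hv a ha => (Multiset.mem_add.1 ha).elim (hu a) (hv a)
  · rintro _ ⟨q, hq, i, -, rfl⟩ a ha
    rw [Multiset.eq_of_mem_replicate ha]
    exact List.mem_map_of_mem hq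

theorem mem_flatMap_factorSymbols_of_mem {fs : List (List (α × Mult) × Mult)} {u : Multiset α}
    (hu : u ∈ concatLang (fs.map factorLang)) {a : α} (ha : a ∈ u) :
    a ∈ fs.flatMap factorSymbols := by
  induction fs generalizing u with
  | nil => simp_all [concatLang]
  | cons f fs ih =>
    rw [List.map_cons, concatLang_cons] at hu
    obtain ⟨u₁, hu₁, u₂, hu₂, rfl⟩ := hu
    rw [List.flatMap_cons, List.mem_append]
    exact (Multiset.mem_add.1 ha).imp (mem_factorSymbols_of_mem hu₁) (ih hu₂)

theorem tripleHull_concatLang_subset [DecidableEq α] (fs : List (List (α × Mult) × Mult))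
    (hnd : (fs.flatMap factorSymbols).Nodup) :
    tripleHull (concatLang (fs.map factorLang)) ⊆ concatLang (fs.map factorLang) := by
  induction fs with
  | nil => exact tripleHull_subset_of_unary (by simp [concatLang, Unary])
  | cons f fs ih =>
    rw [List.flatMap_cons, List.nodup_append] at hnd
    rw [List.map_cons, concatLang_cons]
    exact tripleHull_add_subset (· ∈ factorSymbols f)
      (fun _ hu _ ha => mem_factorSymbols_of_mem hu ha)
      (fun _ hu a ha haf => hnd.2.2 a haf a (mem_flatMap_factorSymbols_of_mem hu ha) rfl)
      (tripleHull_powLang_subset (fun _ => unary_of_mem_disjLang) f.2) (ih hnd.2.1)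

theorem DME.tripleHull_lang [DecidableEq α] (E : DME α) : tripleHull E.lang = E.lang :=
  (tripleHull_concatLang_subset E.factors E.distinct).antisymm (subset_tripleHull _)

theorem DME.mem_lang_iff [DecidableEq α] (E : DME α) (w : Multiset α) :
    w ∈ E.lang ↔ (∀ a, (a, w.count a) ∈ Ntrip E) ∧
      (∀ a ∈ w, ∀ b ∈ w, (a, b) ∉ Ctrip E) ∧ ∀ X ∈ Ptrip E, ∃ a ∈ X, a ∈ w := by
  rw [← E.tripleHull_lang]
  simp [tripleHull, Ctrip, Ntrip, Ptrip]

end DMELang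

theorem dme_lang_eq_iff_triple_eq_general (α : Type) [DecidableEq α]
    (E₁ E₂ : DME α) :
    E₁.lang = E₂.lang ↔
      Ctrip E₁ = Ctrip E₂ ∧ Ntrip E₁ = Ntrip E₂ ∧ Ptrip E₁ = Ptrip E₂ := by
  constructor
  · intro h
    simp only [Ctrip, Ntrip, Ptrip, h, and_self]
  · rintro ⟨hC, hN, hP⟩
    ext w
    rw [E₁.mem_lang_iff, E₂.mem_lang_iff, hC, hN, hP]

/-- Two DMEs have equal languages iff they have equal
characterizing triples `(C_E, N_E, P_E)`. -/
theorem dme_lang_eq_iff_triple_eq (α : Type) [Fintype α] [DecidableEq α]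
    (E₁ E₂ : DME α) :
    E₁.lang = E₂.lang ↔
      Ctrip E₁ = Ctrip E₂ ∧ Ntrip E₁ = Ntrip E₂ ∧ Ptrip E₁ = Ptrip E₂ :=
  dme_lang_eq_iff_triple_eq_general α E₁ E₂

end LSXML
end
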